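/- Let f : ℝ^d → ℝ be convex and twice differentiable with minimizer x⋆. Let X be a twice-differentiable solution of Nesterov's accelerated gradient flow X''(t) + (3/t) X'(t) + ∇f(X t) = 0 on (0, ∞). Define V(t) = t² (f(X t) - f(x⋆)) + 2 ‖(X t - x⋆) + (t/2) X'(t)‖². Then V is nonincreasing on (0, ∞), and consequently f(X t) - f(x⋆) ≤ V(t₀)/t² for all t ≥ t₀ > 0. -/

import Mathlib

/-!
Along the flow, the anchor `Z t = X t - x⋆ + (t/2) X' t` has `Z' = -(t/2) ∇f(X t)`, because
the ODE cancels the `X'` and `X''` terms. Hence the energy `V t = t² (f(X t) - f x⋆) + 2 ‖Z t‖²`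
has `V' = 2t (f(X t) - f x⋆ - ⟪∇f(X t), X t - x⋆⟫)`, which is `≤ 0` by convexity. So `V`
decreases, and `t² (f(X t) - f x⋆) ≤ V t ≤ V t₀`.
-/

open scoped RealInnerProductSpace
open Set

variable {E : Type*} [NormedAddCommGroup E] [InnerProductSpace ℝ E]

theorem HasGradientAt.comp_hasDerivAt [CompleteSpace E] {f : E → ℝ} {g : E} {γ : ℝ → E}
    {γ' : E} {t : ℝ} (hf : HasGradientAt f g (γ t)) (hγ : HasDerivAt γ γ' t) :
    HasDerivAt (fun s => f (γ s)) ⟪g, γ'⟫ t := by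
  have h := hf.hasFDerivAt.comp_hasDerivAt t hγ
  simp only [InnerProductSpace.toDual_apply_apply] at h
  exact h

noncomputable def nesterovEnergy (f : E → ℝ) (xstar : E) (X X' : ℝ → E) (t : ℝ) : ℝ :=
  t ^ 2 * (f (X t) - f xstar) + 2 * ‖(X t - xstar) + (t / 2) • X' t‖ ^ 2

section Flow

variable {f : E → ℝ} {g : E → E} {xstar : E} {X X' X'' : ℝ → E} {t : ℝ}

theorem hasDerivAt_nesterov_anchor (ht : t ≠ 0) (hX : HasDerivAt X (X' t) t)
    (hX' : HasDerivAt X' (X'' t) t) (hODE : X'' t + (3 / t) • X' t + g (X t) = 0) :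
    HasDerivAt (fun s => (X s - xstar) + (s / 2) • X' s) (-(t / 2) • g (X t)) t := by
  have hX''_eq : X'' t = -(3 / t) • X' t - g (X t) := by
    linear_combination (norm := module) hODE
  have hhalf : HasDerivAt (fun s : ℝ => s / 2) (1 / 2) t := (hasDerivAt_id t).div_const 2
  refine ((hX.sub_const xstar).add (hhalf.smul hX')).congr_deriv ?_
  rw [hX''_eq]
  match_scalars <;> field_simp
  ring

theorem hasDerivAt_nesterovEnergy [CompleteSpace E] (ht : t ≠ 0)
    (hgrad : HasGradientAt f (g (X t)) (X t)) (hX : HasDerivAt X (X' t) t)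
    (hX' : HasDerivAt X' (X'' t) t) (hODE : X'' t + (3 / t) • X' t + g (X t) = 0) :
    HasDerivAt (nesterovEnergy f xstar X X')
      (2 * t * (f (X t) - f xstar - ⟪g (X t), X t - xstar⟫)) t := by
  have hpot := (hasDerivAt_pow 2 t).mul ((hgrad.comp_hasDerivAt hX).sub_const (f xstar))
  have hkin :=
    ((hasDerivAt_nesterov_anchor (xstar := xstar) ht hX hX' hODE).norm_sq).const_mul 2
  refine (hpot.add hkin).congr_deriv ?_
  simp only [inner_add_left, real_inner_smul_right, real_inner_comm (g (X t))]
  ring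

theorem nesterovEnergy_antitoneOn [CompleteSpace E]
    (hgrad : ∀ t ∈ Ioi (0 : ℝ), HasGradientAt f (g (X t)) (X t))
    (hconv : ∀ t ∈ Ioi (0 : ℝ), f xstar ≥ f (X t) + ⟪g (X t), xstar - X t⟫)
    (hX : ∀ t ∈ Ioi (0 : ℝ), HasDerivAt X (X' t) t)
    (hX' : ∀ t ∈ Ioi (0 : ℝ), HasDerivAt X' (X'' t) t)
    (hODE : ∀ t ∈ Ioi (0 : ℝ), X'' t + (3 / t) • X' t + g (X t) = 0) :
    AntitoneOn (nesterovEnergy f xstar X X') (Ioi 0) := by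
  have hV : ∀ t ∈ Ioi (0 : ℝ), HasDerivAt (nesterovEnergy f xstar X X')
      (2 * t * (f (X t) - f xstar - ⟪g (X t), X t - xstar⟫)) t := fun t ht =>
    hasDerivAt_nesterovEnergy ht.ne' (hgrad t ht) (hX t ht) (hX' t ht) (hODE t ht)
  refine antitoneOn_of_hasDerivWithinAt_nonpos (convex_Ioi 0)
    (f' := fun t => 2 * t * (f (X t) - f xstar - ⟪g (X t), X t - xstar⟫))
    (fun t ht => (hV t ht).continuousAt.continuousWithinAt) (fun t ht => ?_) (fun t ht => ?_)
  · rw [interior_Ioi] at ht ⊢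
    exact (hV t ht).hasDerivWithinAt
  · rw [interior_Ioi] at ht
    have hsub : ⟪g (X t), xstar - X t⟫ = -⟪g (X t), X t - xstar⟫ := by
      rw [← inner_neg_right, neg_sub]
    have hgap : f (X t) - f xstar - ⟪g (X t), X t - xstar⟫ ≤ 0 := by
      linarith [hconv t ht]
    exact mul_nonpos_of_nonneg_of_nonpos (by linarith [mem_Ioi.mp ht]) hgap

theorem sq_mul_sub_le_nesterovEnergy :
    t ^ 2 * (f (X t) - f xstar) ≤ nesterovEnergy f xstar X X' t :=
  le_add_of_nonneg_right (by positivity)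

end Flow

theorem accelerated_gradient_flow_convex_rate_general
    (d : ℕ) (f : EuclideanSpace ℝ (Fin d) → ℝ) (hf : ContDiff ℝ 2 f)
    (hconv : ∀ x y, f y ≥ f x + ⟪gradient f x, y - x⟫)
    (xstar : EuclideanSpace ℝ (Fin d))
    (X X' X'' : ℝ → EuclideanSpace ℝ (Fin d))
    (hX : ∀ t ∈ Set.Ioi (0 : ℝ), HasDerivAt X (X' t) t)
    (hX' : ∀ t ∈ Set.Ioi (0 : ℝ), HasDerivAt X' (X'' t) t)
    (hODE : ∀ t ∈ Set.Ioi (0 : ℝ),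
      X'' t + (3 / t) • X' t + gradient f (X t) = 0)
    (V : ℝ → ℝ)
    (hV : ∀ t, V t = t ^ 2 * (f (X t) - f xstar)
        + 2 * ‖(X t - xstar) + (t / 2) • X' t‖ ^ 2) :
    AntitoneOn V (Set.Ioi (0 : ℝ)) ∧
      ∀ t₀ t : ℝ, 0 < t₀ → t₀ ≤ t → f (X t) - f xstar ≤ V t₀ / t ^ 2 := by
  obtain rfl : V = nesterovEnergy f xstar X X' := funext hV
  have hanti : AntitoneOn (nesterovEnergy f xstar X X') (Ioi 0) :=
    nesterovEnergy_antitoneOn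
      (fun t _ => (hf.differentiable (by norm_num) (X t)).hasGradientAt)
      (fun t _ => hconv (X t) xstar) hX hX' hODE
  refine ⟨hanti, fun t₀ t ht₀ htt => ?_⟩
  have ht : 0 < t := ht₀.trans_le htt
  rw [le_div_iff₀ (by positivity), mul_comm]
  exact sq_mul_sub_le_nesterovEnergy.trans (hanti ht₀ ht htt)

theorem accelerated_gradient_flow_convex_rate
    (d : ℕ) (f : EuclideanSpace ℝ (Fin d) → ℝ) (hf : ContDiff ℝ 2 f)
    (hconv : ∀ x y, f y ≥ f x + ⟪gradient f x, y - x⟫)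
    (xstar : EuclideanSpace ℝ (Fin d)) (hmin : ∀ y, f xstar ≤ f y)
    (X X' X'' : ℝ → EuclideanSpace ℝ (Fin d))
    (hX : ∀ t ∈ Set.Ioi (0 : ℝ), HasDerivAt X (X' t) t)
    (hX' : ∀ t ∈ Set.Ioi (0 : ℝ), HasDerivAt X' (X'' t) t)
    (hODE : ∀ t ∈ Set.Ioi (0 : ℝ),
      X'' t + (3 / t) • X' t + gradient f (X t) = 0)
    (V : ℝ → ℝ)
    (hV : ∀ t, V t = t ^ 2 * (f (X t) - f xstar)
        + 2 * ‖(X t - xstar) + (t / 2) • X' t‖ ^ 2) :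
    AntitoneOn V (Set.Ioi (0 : ℝ)) ∧
      ∀ t₀ t : ℝ, 0 < t₀ → t₀ ≤ t → f (X t) - f xstar ≤ V t₀ / t ^ 2 :=
  accelerated_gradient_flow_convex_rate_general d f hf hconv xstar X X' X'' hX hX' hODE V hV
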